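/- For every nonnegative integer n, ₃F₂(-n, (n+4)/2, (n+3)/2; 4/3, 5/3; 1) = 2(1 - (9n+10)·(-8)^{n+1})/(81(n+1)(n+2)·4ⁿ). -/

import Mathlib

open scoped BigOperators

/-- Pochhammer symbol `(a)_n = a(a+1)⋯(a+n-1)`. -/
noncomputable def poch (a : ℝ) (n : ℕ) : ℝ := ∏ i ∈ Finset.range n, (a + i)

/-! ### Auxiliary definitions and lemmas -/

/-- The simplified summand `(-27/4)^k C(n+2k+2, 3k+2)`. -/
noncomputable def aT (n k : ℕ) : ℝ :=
  (-27/4 : ℝ)^k * (Nat.choose (n+2*k+2) (3*k+2) : ℝ)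

/-- WZ certificate function. -/
noncomputable def gT (n k : ℕ) : ℝ :=
  -16*k*(3*k+1)*(3*k+2) * (-27/4 : ℝ)^k * (Nat.factorial (n+2*k+2) : ℝ) /
    ((Nat.factorial (3*k+2) : ℝ) * (Nat.factorial (n+2-k) : ℝ))

lemma fact_ne (m : ℕ) : ((Nat.factorial m : ℝ)) ≠ 0 :=
  Nat.cast_ne_zero.2 (Nat.factorial_ne_zero m)

lemma fact_s (m : ℕ) : ((Nat.factorial (m+1)) : ℝ) = ((m:ℝ)+1) * (Nat.factorial m : ℝ) := by
  rw [Nat.factorial_succ]; push_cast; ring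

lemma aT_cast (m k : ℕ) :
    aT (m + k) k = (-27/4 : ℝ)^k * (Nat.factorial (m+3*k+2) : ℝ) /
      ((Nat.factorial (3*k+2) : ℝ) * (Nat.factorial m : ℝ)) := by
  unfold aT
  rw [show m+k+2*k+2 = m+3*k+2 by ring]
  rw [Nat.cast_choose ℝ (by omega : 3*k+2 ≤ m+3*k+2)]
  rw [show m+3*k+2 - (3*k+2) = m by omega]
  ring

/-- The termwise WZ identity for `k ≤ n`, written with `n = m + k`. -/
lemma Hlem (m k : ℕ) :
    16*((m:ℝ)+k+2) * aT (m+k+2) k + 4*(7*((m:ℝ)+k)+22) * aT (m+k+1) k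
      - (8*((m:ℝ)+k)+24) * aT (m+k) k
    = gT (m+k) (k+1) - gT (m+k) k := by
  have h2 : aT (m+k+2) k = (-27/4 : ℝ)^k * (Nat.factorial (m+3*k+4) : ℝ) /
      ((Nat.factorial (3*k+2) : ℝ) * (Nat.factorial (m+2) : ℝ)) := by
    rw [show m+k+2 = (m+2)+k by ring, aT_cast (m+2) k,
      show m+2+3*k+2 = m+3*k+4 by ring]
  have h1 : aT (m+k+1) k = (-27/4 : ℝ)^k * (Nat.factorial (m+3*k+3) : ℝ) /
      ((Nat.factorial (3*k+2) : ℝ) * (Nat.factorial (m+1) : ℝ)) := by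
    rw [show m+k+1 = (m+1)+k by ring, aT_cast (m+1) k,
      show m+1+3*k+2 = m+3*k+3 by ring]
  have h0 := aT_cast m k
  have hg0 : gT (m+k) k = -16*k*(3*k+1)*(3*k+2) * (-27/4 : ℝ)^k *
      (Nat.factorial (m+3*k+2) : ℝ) /
      ((Nat.factorial (3*k+2) : ℝ) * (Nat.factorial (m+2) : ℝ)) := by
    unfold gT
    rw [show m+k+2*k+2 = m+3*k+2 by ring, show m+k+2-k = m+2 by omega]
  have hg1 : gT (m+k) (k+1) = -16*((k:ℝ)+1)*(3*k+4)*(3*k+5) * (-27/4 : ℝ)^(k+1) *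
      (Nat.factorial (m+3*k+4) : ℝ) /
      ((Nat.factorial (3*k+5) : ℝ) * (Nat.factorial (m+1) : ℝ)) := by
    unfold gT
    rw [show m+k+2*(k+1)+2 = m+3*k+4 by ring, show 3*(k+1)+2 = 3*k+5 by ring,
      show m+k+2-(k+1) = m+1 by omega]
    push_cast; ring
  rw [h2, h1, h0, hg0, hg1]
  have e4 : (Nat.factorial (m+3*k+4) : ℝ)
      = ((m:ℝ)+3*k+4) * ((m:ℝ)+3*k+3) * (Nat.factorial (m+3*k+2) : ℝ) := by
    rw [show m+3*k+4 = (m+3*k+3)+1 by ring, Nat.factorial_succ,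
      show m+3*k+3 = (m+3*k+2)+1 by ring, Nat.factorial_succ]
    push_cast; ring
  have e3 : (Nat.factorial (m+3*k+3) : ℝ)
      = ((m:ℝ)+3*k+3) * (Nat.factorial (m+3*k+2) : ℝ) := by
    rw [show m+3*k+3 = (m+3*k+2)+1 by ring, Nat.factorial_succ]; push_cast; ring
  have e5 : (Nat.factorial (3*k+5) : ℝ)
      = ((3*(k:ℝ)+5)) * ((3*(k:ℝ)+4)) * ((3*(k:ℝ)+3)) * (Nat.factorial (3*k+2) : ℝ) := by
    rw [show 3*k+5 = (3*k+4)+1 by ring, Nat.factorial_succ,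
      show 3*k+4 = (3*k+3)+1 by ring, Nat.factorial_succ,
      show 3*k+3 = (3*k+2)+1 by ring, Nat.factorial_succ]
    push_cast; ring
  have em2 : (Nat.factorial (m+2) : ℝ)
      = ((m:ℝ)+2) * ((m:ℝ)+1) * (Nat.factorial m : ℝ) := by
    rw [show m+2 = (m+1)+1 by ring, Nat.factorial_succ, Nat.factorial_succ]
    push_cast; ring
  have em1 : (Nat.factorial (m+1) : ℝ) = ((m:ℝ)+1) * (Nat.factorial m : ℝ) := by
    rw [Nat.factorial_succ]; push_cast; ring
  rw [e4, e3, e5, em2, em1, pow_succ]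
  have hf1 := fact_ne (3*k+2)
  have hf2 := fact_ne m
  have hm1 : ((m:ℝ)+1) ≠ 0 := by positivity
  have hm2 : ((m:ℝ)+2) ≠ 0 := by positivity
  have h33 : (3*(k:ℝ)+3) ≠ 0 := by positivity
  have h34 : (3*(k:ℝ)+4) ≠ 0 := by positivity
  have h35 : (3*(k:ℝ)+5) ≠ 0 := by positivity
  field_simp
  ring

lemma gT_top (n : ℕ) : gT n (n+2) = -16*((n:ℝ)+2) * (-27/4 : ℝ)^(n+2) := by
  have h8 : ((Nat.factorial (3*n+8)) : ℝ)
      = (3*(n:ℝ)+8)*(3*(n:ℝ)+7)*(Nat.factorial (3*n+6) : ℝ) := by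
    rw [show 3*n+8 = (3*n+7)+1 by ring, fact_s (3*n+7),
      show 3*n+7 = (3*n+6)+1 by ring, fact_s (3*n+6)]
    push_cast; ring
  unfold gT
  rw [show n+2*(n+2)+2 = 3*n+6 by ring, show n+2-(n+2) = 0 by omega,
    show 3*(n+2)+2 = 3*n+8 by ring, h8]
  have h6 := fact_ne (3*n+6)
  have p7 : (3*(n:ℝ)+7) ≠ 0 := by positivity
  have p8 : (3*(n:ℝ)+8) ≠ 0 := by positivity
  rw [Nat.factorial_zero]
  push_cast
  field_simp
  ring

lemma gT_snd (n : ℕ) : gT n (n+1) = -16*((n:ℝ)+1)*(3*(n:ℝ)+4) * (-27/4 : ℝ)^(n+1) := by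
  have h5 : ((Nat.factorial (3*n+5)) : ℝ)
      = (3*(n:ℝ)+5)*(Nat.factorial (3*n+4) : ℝ) := by
    rw [show 3*n+5 = (3*n+4)+1 by ring, fact_s (3*n+4)]
    push_cast; ring
  unfold gT
  rw [show n+2*(n+1)+2 = 3*n+4 by ring, show n+2-(n+1) = 1 by omega,
    show 3*(n+1)+2 = 3*n+5 by ring, h5]
  have h4 := fact_ne (3*n+4)
  have p5 : (3*(n:ℝ)+5) ≠ 0 := by positivity
  rw [Nat.factorial_one]
  push_cast
  field_simp
  ring

noncomputable def Aq (n : ℕ) : ℝ := ∑ k ∈ Finset.range (n+1), aT n k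

lemma Hbound (n : ℕ) :
    16*((n:ℝ)+2) * aT (n+2) (n+1) + 4*(7*(n:ℝ)+22) * aT (n+1) (n+1)
      - (8*(n:ℝ)+24) * aT n (n+1)
    = gT n (n+2) - gT n (n+1) := by
  have a2 : aT (n+2) (n+1) = (-27/4 : ℝ)^(n+1) * (3*(n:ℝ)+6) := by
    unfold aT
    rw [show n+2+2*(n+1)+2 = (3*n+5)+1 by ring, show 3*(n+1)+2 = 3*n+5 by ring,
      Nat.choose_succ_self_right]
    push_cast; ring
  have a1 : aT (n+1) (n+1) = (-27/4 : ℝ)^(n+1) := by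
    unfold aT
    rw [show n+1+2*(n+1)+2 = 3*n+5 by ring, show 3*(n+1)+2 = 3*n+5 by ring,
      Nat.choose_self]
    push_cast; ring
  have a0 : aT n (n+1) = 0 := by
    unfold aT
    rw [Nat.choose_eq_zero_of_lt (by omega)]
    simp
  rw [a2, a1, a0, gT_top, gT_snd, pow_succ]
  ring

lemma Aq_rec (n : ℕ) :
    16*((n:ℝ)+2) * Aq (n+2) + 4*(7*(n:ℝ)+22) * Aq (n+1) - (8*(n:ℝ)+24) * Aq n = 0 := by
  have tele : ∑ k ∈ Finset.range (n+2), (gT n (k+1) - gT n k) = gT n (n+2) - gT n 0 :=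
    Finset.sum_range_sub (gT n) (n+2)
  have hterm : ∀ k ∈ Finset.range (n+2),
      16*((n:ℝ)+2) * aT (n+2) k + 4*(7*(n:ℝ)+22) * aT (n+1) k
        - (8*(n:ℝ)+24) * aT n k = gT n (k+1) - gT n k := by
    intro k hk
    rw [Finset.mem_range] at hk
    rcases Nat.lt_or_ge k (n+1) with h | h
    · obtain ⟨m, rfl⟩ : ∃ m, n = m + k := ⟨n - k, by omega⟩
      have := Hlem m k
      push_cast at this ⊢
      linarith [this]
    · have hk1 : k = n+1 := by omega
      subst hk1
      exact Hbound n
  have hsum : ∑ k ∈ Finset.range (n+2),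
      (16*((n:ℝ)+2) * aT (n+2) k + 4*(7*(n:ℝ)+22) * aT (n+1) k
        - (8*(n:ℝ)+24) * aT n k) = gT n (n+2) - gT n 0 := by
    rw [Finset.sum_congr rfl hterm, tele]
  have g0 : gT n 0 = 0 := by unfold gT; push_cast; ring
  have split : ∑ k ∈ Finset.range (n+2),
      (16*((n:ℝ)+2) * aT (n+2) k + 4*(7*(n:ℝ)+22) * aT (n+1) k
        - (8*(n:ℝ)+24) * aT n k)
      = 16*((n:ℝ)+2) * (∑ k ∈ Finset.range (n+2), aT (n+2) k)
        + 4*(7*(n:ℝ)+22) * (∑ k ∈ Finset.range (n+2), aT (n+1) k)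
        - (8*(n:ℝ)+24) * (∑ k ∈ Finset.range (n+2), aT n k) := by
    rw [Finset.mul_sum, Finset.mul_sum, Finset.mul_sum, ← Finset.sum_add_distrib,
      ← Finset.sum_sub_distrib]
  have s2 : ∑ k ∈ Finset.range (n+2), aT (n+2) k = Aq (n+2) - aT (n+2) (n+2) := by
    unfold Aq
    rw [Finset.sum_range_succ (aT (n+2)) (n+2)]
    ring
  have s1 : ∑ k ∈ Finset.range (n+2), aT (n+1) k = Aq (n+1) := rfl
  have s0 : ∑ k ∈ Finset.range (n+2), aT n k = Aq n := by
    unfold Aq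
    rw [Finset.sum_range_succ (aT n) (n+1)]
    have : aT n (n+1) = 0 := by
      unfold aT; rw [Nat.choose_eq_zero_of_lt (by omega)]; simp
    rw [this]; ring
  have haTn2 : aT (n+2) (n+2) = (-27/4 : ℝ)^(n+2) := by
    unfold aT
    rw [show n+2+2*(n+2)+2 = 3*n+8 by ring, show 3*(n+2)+2 = 3*n+8 by ring,
      Nat.choose_self]
    push_cast; ring
  rw [split, s2, s1, s0, g0, gT_top, haTn2] at hsum
  linarith [hsum]

lemma Aq_closed (n : ℕ) :
    Aq n = (1 - (9*(n:ℝ)+10) * (-8 : ℝ)^(n+1)) / (81 * 4^n) := by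
  set f : ℕ → ℝ := fun n => (1 - (9*(n:ℝ)+10) * (-8 : ℝ)^(n+1)) / (81 * 4^n) with hf
  suffices h : ∀ n, Aq n = f n ∧ Aq (n+1) = f (n+1) from (h n).1
  intro n
  induction n with
  | zero =>
    constructor
    · show Aq 0 = f 0
      rw [hf]; unfold Aq aT
      simp [Finset.sum_range_succ]
      norm_num
    · show Aq 1 = f 1
      rw [hf]; unfold Aq aT
      simp [Finset.sum_range_succ]
      norm_num [Nat.choose]
  | succ n ih =>
    refine ⟨ih.2, ?_⟩
    have hrec := Aq_rec n
    rw [ih.1, ih.2] at hrec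
    have hfrec : 16*((n:ℝ)+2) * f (n+2) + 4*(7*(n:ℝ)+22) * f (n+1)
        - (8*(n:ℝ)+24) * f n = 0 := by
      rw [hf]
      simp only
      have h4 : (4:ℝ)^n ≠ 0 := by positivity
      rw [show (-8:ℝ)^(n+2+1) = (-8:ℝ)^(n+1)*64 by rw [pow_succ, pow_succ]; ring,
        show (-8:ℝ)^(n+1+1) = (-8:ℝ)^(n+1)*(-8) by rw [pow_succ],
        show (4:ℝ)^(n+2) = (4:ℝ)^n*16 by rw [pow_succ, pow_succ]; ring,
        show (4:ℝ)^(n+1) = (4:ℝ)^n*4 by rw [pow_succ]]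
      field_simp
      push_cast
      ring
    have h16 : 16*((n:ℝ)+2) ≠ 0 := by positivity
    have heq : 16*((n:ℝ)+2) * Aq (n+2) = 16*((n:ℝ)+2) * f (n+2) := by
      push_cast at hrec hfrec ⊢
      linarith [hrec, hfrec]
    have := mul_left_cancel₀ h16 heq
    convert this using 2 <;> push_cast <;> ring

lemma poch_pos {a : ℝ} (ha : 0 < a) (k : ℕ) : 0 < poch a k := by
  unfold poch
  exact Finset.prod_pos fun i _ => by positivity

lemma poch_succ (a : ℝ) (k : ℕ) : poch a (k+1) = poch a k * (a + k) := by
  unfold poch; rw [Finset.prod_range_succ]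

lemma poch_zero (a : ℝ) : poch a 0 = 1 := by unfold poch; simp

/-- Key ratio identity with `n = m+k+1` (so `k < n`). -/
lemma step_key (m k : ℕ) :
    aT (m+k+1) k * ((k:ℝ) - ((m:ℝ)+k+1)) * ((((m:ℝ)+k+1)+4)/2 + k) * ((((m:ℝ)+k+1)+3)/2 + k)
    = aT (m+k+1) (k+1) * ((4/3:ℝ) + k) * ((5/3:ℝ) + k) * ((k:ℝ)+1) := by
  have h1 : aT (m+k+1) k = (-27/4 : ℝ)^k * (Nat.factorial (m+3*k+3) : ℝ) /
      ((Nat.factorial (3*k+2) : ℝ) * (Nat.factorial (m+1) : ℝ)) := by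
    rw [show m+k+1 = (m+1)+k by ring, aT_cast (m+1) k, show m+1+3*k+2 = m+3*k+3 by ring]
  have h2 : aT (m+k+1) (k+1) = (-27/4 : ℝ)^(k+1) * (Nat.factorial (m+3*k+5) : ℝ) /
      ((Nat.factorial (3*k+5) : ℝ) * (Nat.factorial m : ℝ)) := by
    rw [show m+k+1 = m+(k+1) by ring, aT_cast m (k+1), show m+3*(k+1)+2 = m+3*k+5 by ring,
      show 3*(k+1)+2 = 3*k+5 by ring]
  have e5 : (Nat.factorial (m+3*k+5) : ℝ)
      = ((m:ℝ)+3*k+5) * ((m:ℝ)+3*k+4) * (Nat.factorial (m+3*k+3) : ℝ) := by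
    rw [show m+3*k+5 = (m+3*k+4)+1 by ring, fact_s (m+3*k+4),
      show m+3*k+4 = (m+3*k+3)+1 by ring, fact_s (m+3*k+3)]
    push_cast; ring
  have f5 : (Nat.factorial (3*k+5) : ℝ)
      = (3*(k:ℝ)+5) * (3*(k:ℝ)+4) * (3*(k:ℝ)+3) * (Nat.factorial (3*k+2) : ℝ) := by
    rw [show 3*k+5 = (3*k+4)+1 by ring, fact_s (3*k+4),
      show 3*k+4 = (3*k+3)+1 by ring, fact_s (3*k+3),
      show 3*k+3 = (3*k+2)+1 by ring, fact_s (3*k+2)]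
    push_cast; ring
  have em : (Nat.factorial (m+1) : ℝ) = ((m:ℝ)+1) * (Nat.factorial m : ℝ) := fact_s m
  rw [h1, h2, e5, f5, em, pow_succ]
  have hf1 := fact_ne (3*k+2)
  have hf2 := fact_ne m
  have hf3 := fact_ne (m+3*k+3)
  have hm1 : ((m:ℝ)+1) ≠ 0 := by positivity
  have h33 : (3*(k:ℝ)+3) ≠ 0 := by positivity
  have h34 : (3*(k:ℝ)+4) ≠ 0 := by positivity
  have h35 : (3*(k:ℝ)+5) ≠ 0 := by positivity
  field_simp
  ring

lemma term_eq (n : ℕ) : ∀ k, k ≤ n →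
    poch (-(n:ℝ)) k * poch (((n:ℝ)+4)/2) k * poch (((n:ℝ)+3)/2) k /
      (poch (4/3) k * poch (5/3) k * (Nat.factorial k))
    = 2 * aT n k / (((n:ℝ)+1) * ((n:ℝ)+2)) := by
  intro k
  induction k with
  | zero =>
    intro _
    have ha : aT n 0 = ((n:ℝ)+1) * ((n:ℝ)+2) / 2 := by
      unfold aT
      rw [show n+2*0+2 = n+2 by ring, show 3*0+2 = 2 by ring]
      rw [Nat.cast_choose ℝ (by omega : 2 ≤ n+2), show n+2-2 = n by omega]
      rw [show n+2 = (n+1)+1 by ring, fact_s (n+1), fact_s n]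
      rw [show (2:ℕ).factorial = 2 by rfl]
      have := fact_ne n
      push_cast
      field_simp
      ring
    rw [ha]
    simp only [poch_zero, Nat.factorial_zero]
    have h1 : ((n:ℝ)+1) ≠ 0 := by positivity
    have h2 : ((n:ℝ)+2) ≠ 0 := by positivity
    field_simp
    norm_num
  | succ k ih =>
    intro hk
    have IH := ih (by omega)
    obtain ⟨m, hm⟩ : ∃ m, n = m + k + 1 := ⟨n - k - 1, by omega⟩
    have hkey := step_key m k
    rw [← hm] at hkey
    have hmn : ((m:ℝ) + k + 1) = (n:ℝ) := by rw [hm]; push_cast; ring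
    rw [hmn] at hkey
    have hQ1 : (0:ℝ) < poch (4/3) k := poch_pos (by norm_num) k
    have hQ2 : (0:ℝ) < poch (5/3) k := poch_pos (by norm_num) k
    have hK : (0:ℝ) < (Nat.factorial k : ℝ) := by
      exact_mod_cast Nat.factorial_pos k
    have h1 : ((n:ℝ)+1) ≠ 0 := by positivity
    have h2 : ((n:ℝ)+2) ≠ 0 := by positivity
    rw [poch_succ, poch_succ, poch_succ, poch_succ, poch_succ, fact_s k]
    rw [div_eq_div_iff (by positivity) (by positivity)] at IH ⊢
    linear_combination (((k:ℝ)) - n) * (((n:ℝ)+4)/2 + k) * (((n:ℝ)+3)/2 + k) * IH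
      + 2 * poch (4/3) k * poch (5/3) k * (Nat.factorial k : ℝ) * hkey

theorem stmt13 (n : ℕ) :
    ∑ k ∈ Finset.range (n+1),
      poch (-(n:ℝ)) k * poch (((n:ℝ)+4)/2) k * poch (((n:ℝ)+3)/2) k /
        (poch (4/3) k * poch (5/3) k * (Nat.factorial k))
      = 2 * (1 - (9 * (n:ℝ) + 10) * (-8 : ℝ) ^ (n+1)) /
          (81 * ((n:ℝ)+1) * ((n:ℝ)+2) * 4 ^ n) := by
  have hsum : ∑ k ∈ Finset.range (n+1),
      poch (-(n:ℝ)) k * poch (((n:ℝ)+4)/2) k * poch (((n:ℝ)+3)/2) k /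
        (poch (4/3) k * poch (5/3) k * (Nat.factorial k))
      = ∑ k ∈ Finset.range (n+1), 2 * aT n k / (((n:ℝ)+1) * ((n:ℝ)+2)) := by
    refine Finset.sum_congr rfl fun k hk => ?_
    exact term_eq n k (Nat.lt_succ_iff.mp (Finset.mem_range.mp hk))
  rw [hsum]
  have : ∑ k ∈ Finset.range (n+1), 2 * aT n k / (((n:ℝ)+1) * ((n:ℝ)+2))
      = 2 * Aq n / (((n:ℝ)+1) * ((n:ℝ)+2)) := by
    rw [Aq, Finset.mul_sum, Finset.sum_div]
  rw [this, Aq_closed n]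
  have h1 : ((n:ℝ)+1) ≠ 0 := by positivity
  have h2 : ((n:ℝ)+2) ≠ 0 := by positivity
  have h4 : (4:ℝ)^n ≠ 0 := by positivity
  rw [mul_div_assoc', div_div, div_eq_div_iff (by positivity) (by positivity)]
  ring
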